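/- (Key integral estimate behind the Nikolskii averaging lemma) Let X be a Banach space, α ∈ (0,1), r ∈ [1,∞), and let u : [0,T] → X be Bochner r-integrable with finite Nikolskii seminorm [u] := sup_{0 < h ≤ T} h^{−α} (∫_{[0, T−h]} ‖u(s+h) − u(s)‖_X^r ds)^{1/r}. Then Σ_{m=1}^M τ^{−1} ∫_{I_m} ∫_{I_m} ‖u(s) − u(t)‖_X^r dt ds ≤ (2^{αr+1}/(αr+1)) · τ^{αr} · [u]^r. -/

import Mathlib

open MeasureTheory

/-- The Nikolskii seminorm `[f] = sup_{0 < h ≤ T} h^(-α) (∫_{[0,T-h]} ‖f(s+h) - f(s)‖^r ds)^(1/r)`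
of a path `f : ℝ → X` (as a supremum in `ℝ`). -/
noncomputable def nikSeminorm (X : Type*) [NormedAddCommGroup X] (T α r : ℝ) (f : ℝ → X) : ℝ :=
  sSup {x : ℝ | ∃ h ∈ Set.Ioc (0 : ℝ) T,
    x = h ^ (-α) * (∫ s in Set.Icc (0 : ℝ) (T - h), ‖f (s + h) - f s‖ ^ r) ^ (1 / r)}

/-!
Each block `I_m × I_m` lies in the strip `|s - t| ≤ τ`. Substituting `t = s + h` and using
Tonelli, the sum is at most `∫_{-τ}^{τ} ∫ ‖u (s + h) - u s‖^r ds dh`, the inner integral running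
over `{s | s, s + h ∈ [0, T]}`. Up to the reflection `h ↦ -h` this inner integral is the one in
the seminorm, so it is at most `|h|^(αr) [u]^r`; integrating in `h` gives
`2 τ^(αr+1) / (αr+1) [u]^r`, hence the bound with the constant `2 / (αr+1) ≤ 2^(αr+1) / (αr+1)`.
-/

open Set
open scoped ENNReal

lemma ofReal_integral_le_lintegral_ofReal {β : Type*} [MeasurableSpace β] {μ : Measure β}
    {f : β → ℝ} (hf : ∀ x, 0 ≤ f x) :
    ENNReal.ofReal (∫ x, f x ∂μ) ≤ ∫⁻ x, ENNReal.ofReal (f x) ∂μ :=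
  calc ENNReal.ofReal (∫ x, f x ∂μ) = ‖∫ x, f x ∂μ‖ₑ :=
        (Real.enorm_of_nonneg (integral_nonneg hf)).symm
    _ ≤ ∫⁻ x, ‖f x‖ₑ ∂μ := enorm_integral_le_lintegral_enorm f
    _ = ∫⁻ x, ENNReal.ofReal (f x) ∂μ := lintegral_congr fun x => Real.enorm_of_nonneg (hf x)

lemma setLIntegral_Icc_le_setLIntegral_comp_const_add {f : ℝ → ℝ≥0∞} {a b s τ : ℝ}
    (hab : Icc a b ⊆ Icc (s - τ) (s + τ)) :
    ∫⁻ t in Icc a b, f t ≤ ∫⁻ h in Icc (-τ) τ, f (s + h) := by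
  have hshift := (measurePreserving_add_left volume s).setLIntegral_comp_preimage_emb
    (measurableEmbedding_addLeft s) f (Icc (s - τ) (s + τ))
  rw [preimage_const_add_Icc, sub_sub_cancel_left, add_sub_cancel_left] at hshift
  exact (lintegral_mono_set hab).trans_eq hshift.symm

lemma sum_setLIntegral_Icc_le_lintegral (f : ℝ → ℝ≥0∞) (τ : ℝ) (M : ℕ) :
    ∑ m ∈ Finset.Icc 1 M, ∫⁻ s in Icc (((m : ℝ) - 1) * τ) (m * τ), f s ≤ ∫⁻ s, f s := by
  have hdisj : (Finset.Icc 1 M : Set ℕ).PairwiseDisjoint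
      fun m : ℕ => Ioc (((m : ℝ) - 1) * τ) (m * τ) := by
    have := (pairwise_disjoint_Ioc_add_zsmul (0 : ℝ) τ).comp_of_injective
      (f := fun m : ℕ => (m : ℤ) - 1) (fun _ _ h => by simpa using h)
    intro i _ j _ hij
    simpa [Function.onFun, zsmul_eq_mul] using this hij
  calc ∑ m ∈ Finset.Icc 1 M, ∫⁻ s in Icc (((m : ℝ) - 1) * τ) (m * τ), f s
      = ∑ m ∈ Finset.Icc 1 M, ∫⁻ s in Ioc (((m : ℝ) - 1) * τ) (m * τ), f s := by
        simp_rw [Measure.restrict_congr_set Ioc_ae_eq_Icc]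
    _ = ∫⁻ s in ⋃ m ∈ Finset.Icc 1 M, Ioc (((m : ℝ) - 1) * τ) (m * τ), f s :=
        (lintegral_biUnion_finset hdisj (fun _ _ => measurableSet_Ioc) f).symm
    _ ≤ ∫⁻ s, f s := setLIntegral_le_lintegral _ _

lemma Icc_block_subset_Icc {τ T : ℝ} {m M : ℕ} (hτ : 0 ≤ τ) (hMτ : M * τ = T)
    (hm : m ∈ Finset.Icc 1 M) : Icc (((m : ℝ) - 1) * τ) (m * τ) ⊆ Icc 0 T := by
  have h1 : (1 : ℝ) ≤ m := by exact_mod_cast (Finset.mem_Icc.1 hm).1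
  have h2 : (m : ℝ) ≤ M := by exact_mod_cast (Finset.mem_Icc.1 hm).2
  exact Icc_subset_Icc (by nlinarith) (by nlinarith)

theorem sum_lintegral_blocks_le_lintegral_shift {F : ℝ × ℝ → ℝ≥0∞} (hF : AEMeasurable F)
    (τ : ℝ) (M : ℕ) :
    ∑ m ∈ Finset.Icc 1 M, ∫⁻ s in Icc (((m : ℝ) - 1) * τ) (m * τ),
        ∫⁻ t in Icc (((m : ℝ) - 1) * τ) (m * τ), F (s, t)
      ≤ ∫⁻ h in Icc (-τ) τ, ∫⁻ s, F (s, s + h) := by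
  have hshear : AEMeasurable (Function.uncurry fun s h => F (s, s + h))
      (volume.prod (volume.restrict (Icc (-τ) τ))) := by
    rw [Measure.volume_eq_prod] at hF
    exact (hF.comp_quasiMeasurePreserving
      (measurePreserving_prod_add volume volume).quasiMeasurePreserving).mono_measure
      (Measure.prod_mono le_rfl Measure.restrict_le_self)
  calc _ ≤ ∑ m ∈ Finset.Icc 1 M, ∫⁻ s in Icc (((m : ℝ) - 1) * τ) (m * τ),
          ∫⁻ h in Icc (-τ) τ, F (s, s + h) := by
        refine Finset.sum_le_sum fun m _ => setLIntegral_mono' measurableSet_Icc fun s hs =>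
          setLIntegral_Icc_le_setLIntegral_comp_const_add ?_
        exact Icc_subset_Icc (by linarith [hs.2]) (by linarith [hs.1])
    _ ≤ ∫⁻ s, ∫⁻ h in Icc (-τ) τ, F (s, s + h) := sum_setLIntegral_Icc_le_lintegral _ τ M
    _ = _ := lintegral_lintegral_swap hshear

lemma integral_abs_rpow_neg_self {p : ℝ} (hp : 0 ≤ p) {τ : ℝ} (hτ : 0 ≤ τ) :
    ∫ x in -τ..τ, |x| ^ p = 2 * τ ^ (p + 1) / (p + 1) := by
  have hcont : Continuous fun x : ℝ => |x| ^ p := continuous_abs.rpow_const fun _ => Or.inr hp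
  have hhalf : ∫ x in (0 : ℝ)..τ, |x| ^ p = τ ^ (p + 1) / (p + 1) := by
    rw [intervalIntegral.integral_congr fun x hx => congrArg (· ^ p)
      (abs_of_nonneg (uIcc_of_le hτ ▸ hx).1), integral_rpow (Or.inl (by linarith)),
      Real.zero_rpow (by linarith), sub_zero]
  have hneg : ∫ x in -τ..0, |x| ^ p = ∫ x in (0 : ℝ)..τ, |x| ^ p := by
    simpa using (intervalIntegral.integral_comp_neg (a := 0) (b := τ) fun x => |x| ^ p).symm
  rw [← intervalIntegral.integral_add_adjacent_intervals (hcont.intervalIntegrable _ _)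
    (hcont.intervalIntegrable _ _), hneg, hhalf]
  ring

section Increments

variable {X : Type*} [NormedAddCommGroup X]

/-- Working in `ℝ≥0∞` lets Tonelli and monotonicity of the integral apply without
integrability side conditions. -/
noncomputable def incrementPow (T r : ℝ) (u : ℝ → X) : ℝ × ℝ → ℝ≥0∞ :=
  (Icc 0 T ×ˢ Icc 0 T).indicator fun q => ENNReal.ofReal (‖u q.1 - u q.2‖ ^ r)

variable {T r : ℝ} {u : ℝ → X}

lemma incrementPow_swap (q : ℝ × ℝ) : incrementPow T r u q.swap = incrementPow T r u q := by
  simp only [incrementPow, indicator_apply, mem_prod, Prod.fst_swap, Prod.snd_swap, and_comm,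
    norm_sub_rev]

lemma aemeasurable_incrementPow (hu : AEStronglyMeasurable u (volume.restrict (Icc 0 T))) :
    AEMeasurable (incrementPow T r u) := by
  refine (aemeasurable_indicator_iff (measurableSet_Icc.prod measurableSet_Icc)).2 ?_
  rw [Measure.volume_eq_prod, ← Measure.prod_restrict]
  exact ((hu.comp_fst.sub hu.comp_snd).norm.aemeasurable.pow_const r).ennreal_ofReal

lemma lintegral_incrementPow_shift_neg (h : ℝ) :
    ∫⁻ s, incrementPow T r u (s, s + -h) = ∫⁻ s, incrementPow T r u (s, s + h) := by
  rw [← lintegral_add_right_eq_self _ h]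
  congr with s
  rw [add_neg_cancel_right, ← incrementPow_swap]
  rfl

lemma lintegral_incrementPow_shift {h : ℝ} (hh : 0 ≤ h) :
    ∫⁻ s, incrementPow T r u (s, s + h)
      = ∫⁻ s in Icc 0 (T - h), ENNReal.ofReal (‖u (s + h) - u s‖ ^ r) := by
  rw [← lintegral_indicator measurableSet_Icc]
  congr with s
  have hmem : (s, s + h) ∈ Icc 0 T ×ˢ Icc 0 T ↔ s ∈ Icc 0 (T - h) := by
    simp only [mem_prod, mem_Icc]
    constructor <;> intro hs <;> refine ⟨?_, ?_⟩ <;> (try constructor) <;> linarith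
  simp only [incrementPow, indicator_apply, hmem, norm_sub_rev]

/-- `nikSeminorm X T α r u` is by definition `sSup (nikolskiiRatios T α r u)`. -/
def nikolskiiRatios (T α r : ℝ) (u : ℝ → X) : Set ℝ :=
  {x : ℝ | ∃ h ∈ Ioc (0 : ℝ) T,
    x = h ^ (-α) * (∫ s in Icc (0 : ℝ) (T - h), ‖u (s + h) - u s‖ ^ r) ^ (1 / r)}

lemma nikSeminorm_nonneg {α : ℝ} (hT : 0 < T)
    (hfin : BddAbove (nikolskiiRatios T α r u)) :
    0 ≤ nikSeminorm X T α r u :=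
  le_csSup_of_le hfin ⟨T, ⟨hT, le_rfl⟩, rfl⟩ (by positivity)

lemma integral_shift_le_nikSeminorm {α : ℝ} (hr : 0 < r)
    (hfin : BddAbove (nikolskiiRatios T α r u))
    {h : ℝ} (hh : h ∈ Ioc 0 T) :
    ∫ s in Icc 0 (T - h), ‖u (s + h) - u s‖ ^ r ≤ h ^ (α * r) * nikSeminorm X T α r u ^ r := by
  set I := ∫ s in Icc 0 (T - h), ‖u (s + h) - u s‖ ^ r
  have h0 : 0 < h := hh.1
  have hI : 0 ≤ I := by positivity
  have hroot : I ^ (1 / r) ≤ h ^ α * nikSeminorm X T α r u := by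
    have hle : h ^ (-α) * I ^ (1 / r) ≤ nikSeminorm X T α r u := le_csSup hfin ⟨h, hh, rfl⟩
    rwa [Real.rpow_neg h0.le, inv_mul_le_iff₀ (by positivity)] at hle
  calc I = (I ^ (1 / r)) ^ r := by
        rw [← Real.rpow_mul hI, one_div_mul_cancel hr.ne', Real.rpow_one]
    _ ≤ (h ^ α * nikSeminorm X T α r u) ^ r := by gcongr
    _ = h ^ (α * r) * nikSeminorm X T α r u ^ r := by
        rw [Real.mul_rpow (by positivity) (nikSeminorm_nonneg (h0.trans_le hh.2) hfin),
          Real.rpow_mul h0.le]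

lemma integrableOn_norm_sub_comp_add_rpow
    (hu : MemLp u (ENNReal.ofReal r) (volume.restrict (Icc 0 T))) (hr : 0 < r) {h : ℝ}
    (hh : 0 ≤ h) :
    IntegrableOn (fun s => ‖u (s + h) - u s‖ ^ r) (Icc 0 (T - h)) := by
  have hshift : MeasurePreserving (· + h) (volume.restrict (Icc 0 (T - h)))
      (volume.restrict (Icc h T)) := by
    simpa [preimage_add_const_Icc] using
      (measurePreserving_add_right volume h).restrict_preimage (measurableSet_Icc (a := h) (b := T))
  have hu_shift :
      MemLp (fun s => u (s + h)) (ENNReal.ofReal r) (volume.restrict (Icc 0 (T - h))) :=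
    (hu.mono_measure (Measure.restrict_mono (Icc_subset_Icc hh le_rfl) le_rfl))
      |>.comp_measurePreserving hshift
  have hu_left : MemLp u (ENNReal.ofReal r) (volume.restrict (Icc 0 (T - h))) :=
    hu.mono_measure (Measure.restrict_mono (Icc_subset_Icc le_rfl (by linarith)) le_rfl)
  have := (hu_shift.sub hu_left).integrable_norm_rpow (by simpa using hr) ENNReal.ofReal_ne_top
  rwa [ENNReal.toReal_ofReal hr.le] at this

lemma lintegral_incrementPow_shift_le {α : ℝ}
    (hu : MemLp u (ENNReal.ofReal r) (volume.restrict (Icc 0 T))) (hr : 0 < r)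
    (hfin : BddAbove (nikolskiiRatios T α r u))
    {h : ℝ} (hh : |h| ≤ T) :
    ∫⁻ s, incrementPow T r u (s, s + h)
      ≤ ENNReal.ofReal (|h| ^ (α * r) * nikSeminorm X T α r u ^ r) := by
  wlog h0 : 0 ≤ h generalizing h
  · rw [← neg_neg h, lintegral_incrementPow_shift_neg, abs_neg]
    exact this (by rwa [abs_neg]) (by linarith)
  rw [lintegral_incrementPow_shift h0, abs_of_nonneg h0]
  rcases h0.eq_or_lt with rfl | hpos
  · simp [Real.zero_rpow hr.ne']
  rw [← ofReal_integral_eq_lintegral_ofReal (integrableOn_norm_sub_comp_add_rpow hu hr h0)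
    (ae_of_all _ fun s => by positivity)]
  exact ENNReal.ofReal_le_ofReal
    (integral_shift_le_nikSeminorm hr hfin ⟨hpos, (le_abs_self h).trans hh⟩)

lemma ofReal_integral_block_le_lintegral_incrementPow {a b : ℝ} (hab : Icc a b ⊆ Icc 0 T) :
    ENNReal.ofReal (∫ s in Icc a b, ∫ t in Icc a b, ‖u s - u t‖ ^ r)
      ≤ ∫⁻ s in Icc a b, ∫⁻ t in Icc a b, incrementPow T r u (s, t) := by
  refine (ofReal_integral_le_lintegral_ofReal fun s => by positivity).trans
    (setLIntegral_mono' measurableSet_Icc fun s hs =>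
      (ofReal_integral_le_lintegral_ofReal fun t => by positivity).trans_eq
        (setLIntegral_congr_fun measurableSet_Icc fun t ht => ?_))
  rw [incrementPow, indicator_of_mem (mk_mem_prod (hab hs) (hab ht))]

theorem sum_lintegral_blocks_incrementPow_le {α τ : ℝ}
    (hu : MemLp u (ENNReal.ofReal r) (volume.restrict (Icc 0 T))) (hr : 0 < r) (hT : 0 < T)
    (hfin : BddAbove (nikolskiiRatios T α r u))
    (hp : 0 ≤ α * r) (hτ : 0 ≤ τ) (hτT : τ ≤ T) (M : ℕ) :
    ∑ m ∈ Finset.Icc 1 M, ∫⁻ s in Icc (((m : ℝ) - 1) * τ) (m * τ),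
        ∫⁻ t in Icc (((m : ℝ) - 1) * τ) (m * τ), incrementPow T r u (s, t)
      ≤ ENNReal.ofReal (2 * τ ^ (α * r + 1) / (α * r + 1) * nikSeminorm X T α r u ^ r) := by
  have hN := nikSeminorm_nonneg hT hfin
  have hcont : Continuous fun h : ℝ => |h| ^ (α * r) * nikSeminorm X T α r u ^ r :=
    (continuous_abs.rpow_const fun _ => Or.inr hp).mul continuous_const
  calc _ ≤ ∫⁻ h in Icc (-τ) τ, ∫⁻ s, incrementPow T r u (s, s + h) :=
        sum_lintegral_blocks_le_lintegral_shift (aemeasurable_incrementPow hu.1) τ M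
    _ ≤ ∫⁻ h in Icc (-τ) τ, ENNReal.ofReal (|h| ^ (α * r) * nikSeminorm X T α r u ^ r) :=
        setLIntegral_mono' measurableSet_Icc fun h hh => lintegral_incrementPow_shift_le hu hr hfin
          (abs_le.2 ⟨by linarith [hh.1], hh.2.trans hτT⟩)
    _ = ENNReal.ofReal (∫ h in -τ..τ, |h| ^ (α * r) * nikSeminorm X T α r u ^ r) := by
        rw [intervalIntegral.integral_of_le (by linarith), ← integral_Icc_eq_integral_Ioc,
          ofReal_integral_eq_lintegral_ofReal hcont.integrableOn_Icc
            (ae_of_all _ fun h => by positivity)]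
    _ = _ := by rw [intervalIntegral.integral_mul_const, integral_abs_rpow_neg_self hp hτ]

end Increments

/-- **Key integral estimate behind the Nikolskii averaging lemma.** For `u : [0,T] → X`
Bochner `r`-integrable with finite Nikolskii seminorm `[u]`,
`Σ_{m=1}^M τ⁻¹ ∫_{I_m}∫_{I_m} ‖u(s) - u(t)‖^r dt ds ≤ (2^(αr+1)/(αr+1)) τ^(αr) [u]^r`. -/
theorem nikolskii_key_estimate
    {X : Type*} [NormedAddCommGroup X]
    (α r : ℝ) (hα : α ∈ Set.Ioo (0 : ℝ) 1) (hr : 1 ≤ r)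
    (T : ℝ) (hT : 0 < T) (M : ℕ) (hM : 1 ≤ M) (τ : ℝ) (hτ : τ = T / M)
    (u : ℝ → X)
    (hint : MemLp u (ENNReal.ofReal r) (volume.restrict (Set.Icc 0 T)))
    (hfin : BddAbove {x : ℝ | ∃ h ∈ Set.Ioc (0 : ℝ) T,
      x = h ^ (-α) * (∫ s in Set.Icc (0 : ℝ) (T - h), ‖u (s + h) - u s‖ ^ r) ^ (1 / r)}) :
    ∑ m ∈ Finset.Icc 1 M, τ⁻¹ *
        ∫ s in Set.Icc (((m : ℝ) - 1) * τ) ((m : ℝ) * τ),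
          (∫ t in Set.Icc (((m : ℝ) - 1) * τ) ((m : ℝ) * τ), ‖u s - u t‖ ^ r)
      ≤ (2 ^ (α * r + 1) / (α * r + 1)) * τ ^ (α * r) * (nikSeminorm X T α r u) ^ r := by
  have hr0 : 0 < r := by linarith
  have hp : 0 ≤ α * r := mul_nonneg hα.1.le hr0.le
  have hM1 : (1 : ℝ) ≤ M := by exact_mod_cast hM
  have hτ0 : 0 < τ := hτ ▸ div_pos hT (by linarith)
  have hMτ : (M : ℝ) * τ = T := by rw [hτ]; field_simp
  have hN := nikSeminorm_nonneg hT hfin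
  rw [← ENNReal.ofReal_le_ofReal_iff (by positivity),
    ENNReal.ofReal_sum_of_nonneg fun m _ => by positivity]
  calc _ ≤ ∑ m ∈ Finset.Icc 1 M, ENNReal.ofReal τ⁻¹ * ∫⁻ s in Icc (((m : ℝ) - 1) * τ) (m * τ),
          ∫⁻ t in Icc (((m : ℝ) - 1) * τ) (m * τ), incrementPow T r u (s, t) :=
        Finset.sum_le_sum fun m hm => by
          rw [ENNReal.ofReal_mul (by positivity)]
          gcongr
          exact ofReal_integral_block_le_lintegral_incrementPow (Icc_block_subset_Icc hτ0.le hMτ hm)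
    _ ≤ ENNReal.ofReal τ⁻¹ *
          ENNReal.ofReal (2 * τ ^ (α * r + 1) / (α * r + 1) * nikSeminorm X T α r u ^ r) := by
        rw [← Finset.mul_sum]
        gcongr
        exact sum_lintegral_blocks_incrementPow_le hint hr0 hT hfin hp hτ0.le (by nlinarith) M
    _ = ENNReal.ofReal (2 / (α * r + 1) * τ ^ (α * r) * nikSeminorm X T α r u ^ r) := by
        rw [← ENNReal.ofReal_mul (by positivity), Real.rpow_add_one hτ0.ne']
        congr 1
        field_simp
    _ ≤ _ := by
        gcongr
        simpa using Real.rpow_le_rpow_of_exponent_le (x := 2) (by norm_num)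
          (by linarith : 1 ≤ α * r + 1)
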